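/- arXiv:2204.11326 — 8 statements merged into one kernel-verified Lean document; each statement's English description precedes it below -/
import Mathlib

section
/- Let f : ℝ → ℝ be twice continuously differentiable, even, with f(0) = 0, f''(x) > 0 for all x, f'' nonincreasing in |x|, and lim_{|x|→∞} f''(x) = 0. Then for every learning rate η > 2/f''(0) there exists x_η > 0 such that η·f'(x_η) = 2·x_η. -/
/-!
Since `f` is even, `f' 0 = 0`, and `η f''(0) > 2` makes `η f'(x) - 2x` positive just to the right
of `0`. Since `f'' → 0` at infinity, `f'` is sublinear, so `η f'(x) - 2x` is eventually negative.
The intermediate value theorem gives a zero in between.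
-/

open Filter Topology Set

theorem deriv_zero_of_even {f : ℝ → ℝ} (heven : ∀ x, f x = f (-x)) : deriv f 0 = 0 := by
  have h : deriv f 0 = -deriv f (-0) := by
    conv_lhs => rw [show f = fun x ↦ f (-x) from funext heven]
    exact deriv_comp_neg f 0
  rw [neg_zero] at h
  linarith

theorem HasDerivAt.eventually_mul_lt_of_lt {g : ℝ → ℝ} {c m : ℝ} (hg : HasDerivAt g c 0)
    (hg0 : g 0 = 0) (hm : m < c) : ∀ᶠ x in 𝓝[>] 0, m * x < g x := by
  filter_upwards [hg.tendsto_slope_zero_right.eventually_const_lt hm, self_mem_nhdsWithin]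
    with x hslope (hx : 0 < x)
  rw [zero_add, hg0, sub_zero, smul_eq_mul, lt_inv_mul_iff₀ hx] at hslope
  linarith

theorem eventually_lt_mul_of_tendsto_deriv_zero {g : ℝ → ℝ} {m : ℝ} (hg : Differentiable ℝ g)
    (hlim : Tendsto (deriv g) atTop (𝓝 0)) (hm : 0 < m) : ∀ᶠ x in atTop, g x < m * x := by
  obtain ⟨a, ha⟩ := eventually_atTop.mp (hlim.eventually_lt_const (half_pos hm))
  have hslope : ∀ x, a < x → g x < g a + m / 2 * (x - a) := by
    intro x hax
    obtain ⟨c, hc, hgc⟩ := exists_deriv_eq_slope g hax hg.continuous.continuousOn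
      hg.differentiableOn
    have hxa : 0 < x - a := sub_pos.mpr hax
    rw [eq_div_iff hxa.ne'] at hgc
    nlinarith [ha c hc.1.le]
  filter_upwards [eventually_gt_atTop a, eventually_gt_atTop (2 * (g a - m / 2 * a) / m)]
    with x hax hx
  rw [div_lt_iff₀ hm] at hx
  linarith [hslope x hax]

theorem exists_two_periodic_solution_general
    (f : ℝ → ℝ) (hf : ContDiff ℝ 2 f)
    (heven : ∀ x : ℝ, f x = f (-x))
    (hpos : ∀ x : ℝ, 0 < deriv (deriv f) x)
    (hlim : Filter.Tendsto (deriv (deriv f)) (Filter.cocompact ℝ) (nhds 0)) :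
    ∀ η : ℝ, 2 / deriv (deriv f) 0 < η → ∃ x : ℝ, 0 < x ∧ η * deriv f x = 2 * x := by
  intro η hη
  have hf' : ContDiff ℝ 1 (deriv f) := ((contDiff_succ_iff_deriv (n := 1)).mp hf).2.2
  have hdiff : Differentiable ℝ (deriv f) := hf'.differentiable one_ne_zero
  have hηpos : 0 < η := (div_pos two_pos (hpos 0)).trans hη
  have hslope0 : 2 / η < deriv (deriv f) 0 := by
    rwa [div_lt_comm₀ hηpos (hpos 0)]
  obtain ⟨x₀, hlt₀, hx₀ : 0 < x₀⟩ := ((hdiff 0).hasDerivAt.eventually_mul_lt_of_lt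
    (deriv_zero_of_even heven) hslope0 |>.and self_mem_nhdsWithin).exists
  obtain ⟨x₁, hlt₁, hx₀₁⟩ := (eventually_lt_mul_of_tendsto_deriv_zero hdiff
    (hlim.mono_left atTop_le_cocompact) (div_pos two_pos hηpos) |>.and
    (eventually_ge_atTop x₀)).exists
  obtain ⟨x, hx, hfx⟩ : (0 : ℝ) ∈ (fun x ↦ deriv f x - 2 / η * x) '' Ioo x₀ x₁ :=
    intermediate_value_Ioo' hx₀₁ (by have := hdiff.continuous; fun_prop)
      ⟨sub_neg.mpr hlt₁, sub_pos.mpr hlt₀⟩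
  refine ⟨x, hx₀.trans hx.1, ?_⟩
  field_simp at hfx ⊢
  linarith

/-- Under the subquadratic hypotheses plus `f''(x) → 0` as `|x| → ∞`,
for every learning rate `η > 2 / f''(0)` there exists `x_η > 0` with
`η * f'(x_η) = 2 * x_η` (a 2-periodic solution of gradient descent). -/
theorem exists_two_periodic_solution
    (f : ℝ → ℝ) (hf : ContDiff ℝ 2 f)
    (heven : ∀ x : ℝ, f x = f (-x)) (h0 : f 0 = 0)
    (hpos : ∀ x : ℝ, 0 < deriv (deriv f) x)
    (hanti : ∀ s t : ℝ, |t| ≤ |s| → deriv (deriv f) s ≤ deriv (deriv f) t)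
    (hlim : Filter.Tendsto (deriv (deriv f)) (Filter.cocompact ℝ) (nhds 0)) :
    ∀ η : ℝ, 2 / deriv (deriv f) 0 < η → ∃ x : ℝ, 0 < x ∧ η * deriv f x = 2 * x :=
  exists_two_periodic_solution_general f hf heven hpos hlim
end

section
/- Let f : ℝ → ℝ be twice continuously differentiable, even, with f(0) = 0, f''(x) > 0 for all x, and f''(s) < f''(t) whenever |t| < |s|. Let η = 2/f''(0). Then for every x ≠ 0 one has |x − η f'(x)| < |x|, and consequently the gradient descent iterates x_{t+1} = x_t − η f'(x_t) converge to 0 from any initialization x₀. -/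
/-!
Since `f` is even, `f'(0) = 0`, so by the mean value theorem `f'(x) = f''(c) x` for some `c ≠ 0`.
Then `x - η f'(x) = (1 - 2 f''(c) / f''(0)) x`, and `0 < f''(c) < f''(0)` makes the factor lie
in `(-1, 1)`. For the iterates, `|x_t|` decreases to some `L`; a cluster point `y` of the orbit
satisfies `|y| = |y - η f'(y)| = L`, which the strict descent only allows for `y = 0`.
-/

open Filter Topology

theorem Function.Even.deriv_zero {𝕜 F : Type*} [NontriviallyNormedField 𝕜]
    [NormedAddCommGroup F] [NormedSpace 𝕜 F] [IsAddTorsionFree F] {f : 𝕜 → F} (hf : Function.Even f) :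
    deriv f 0 = 0 := by
  have h := deriv_comp_neg f 0
  rw [show (fun x => f (-x)) = f from funext hf, neg_zero] at h
  exact self_eq_neg.mp h

theorem exists_ne_zero_deriv_mul_eq_sub {g : ℝ → ℝ} (hg : Differentiable ℝ g) {x : ℝ}
    (hx : x ≠ 0) : ∃ c ≠ 0, g x - g 0 = deriv g c * x := by
  rcases hx.lt_or_gt with hneg | hpos
  · obtain ⟨c, ⟨-, hc0⟩, hc⟩ :=
      exists_deriv_eq_slope g hneg hg.continuous.continuousOn hg.differentiableOn
    refine ⟨c, hc0.ne, ?_⟩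
    rw [hc]; field_simp; ring
  · obtain ⟨c, ⟨hc0, -⟩, hc⟩ :=
      exists_deriv_eq_slope g hpos hg.continuous.continuousOn hg.differentiableOn
    refine ⟨c, hc0.ne', ?_⟩
    rw [hc]; field_simp; ring

theorem abs_sub_two_div_mul_lt {a b x : ℝ} (ha : 0 < a) (hab : a < b) (hx : x ≠ 0) :
    |x - 2 / b * (a * x)| < |x| := by
  have hb : 0 < b := ha.trans hab
  have hfactor : |1 - 2 * a / b| < 1 := by
    have hlt2 : 2 * a / b < 2 := by rw [div_lt_iff₀ hb]; linarith
    have hpos : 0 < 2 * a / b := by positivity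
    exact abs_lt.mpr ⟨by linarith, by linarith⟩
  calc |x - 2 / b * (a * x)| = |1 - 2 * a / b| * |x| := by rw [← abs_mul]; ring_nf
    _ < |x| := mul_lt_of_lt_one_left (abs_pos.mpr hx) hfactor

theorem tendsto_zero_of_norm_map_lt {E : Type*} [NormedAddCommGroup E] [ProperSpace E]
    {g : E → E} (hg : Continuous g) (hlt : ∀ y, y ≠ 0 → ‖g y‖ < ‖y‖) (hg0 : g 0 = 0)
    {x : ℕ → E} (hx : ∀ t, x (t + 1) = g (x t)) : Tendsto x atTop (𝓝 0) := by
  have hle : ∀ y, ‖g y‖ ≤ ‖y‖ := fun y => by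
    rcases eq_or_ne y 0 with rfl | hy
    · simp [hg0]
    · exact (hlt y hy).le
  have hanti : Antitone fun t => ‖x t‖ :=
    antitone_nat_of_succ_le fun t => hx t ▸ hle (x t)
  set L := ⨅ t, ‖x t‖
  have hL : Tendsto (fun t => ‖x t‖) atTop (𝓝 L) :=
    tendsto_atTop_ciInf hanti ⟨0, by rintro _ ⟨t, rfl⟩; positivity⟩
  obtain ⟨y, -, φ, hφ, hxy⟩ := tendsto_subseq_of_bounded (Metric.isBounded_closedBall)
    fun t => mem_closedBall_zero_iff.mpr (hanti (Nat.zero_le t))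
  have hy : ‖y‖ = L := tendsto_nhds_unique hxy.norm (hL.comp hφ.tendsto_atTop)
  have hgy : ‖g y‖ = L := by
    refine tendsto_nhds_unique ((hg.tendsto y).comp hxy).norm ?_
    simpa [Function.comp_def, hx] using
      hL.comp ((tendsto_add_atTop_nat 1).comp hφ.tendsto_atTop)
  have hy0 : y = 0 := by
    by_contra hy0
    exact (hlt y hy0).ne (hgy.trans hy.symm)
  rw [hy0, norm_zero] at hy
  exact tendsto_zero_iff_norm_tendsto_zero.mpr (hy ▸ hL)

theorem gd_converges_critical_lr_general
    (f : ℝ → ℝ) (hf : ContDiff ℝ 2 f)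
    (heven : ∀ x : ℝ, f x = f (-x))
    (hpos : ∀ x : ℝ, 0 < deriv (deriv f) x)
    (hstrict : ∀ s t : ℝ, |t| < |s| → deriv (deriv f) s < deriv (deriv f) t)
    (η : ℝ) (hη : η = 2 / deriv (deriv f) 0) :
    (∀ x : ℝ, x ≠ 0 → |x - η * deriv f x| < |x|) ∧
    (∀ x : ℕ → ℝ, (∀ t : ℕ, x (t + 1) = x t - η * deriv f (x t)) →
      Filter.Tendsto x Filter.atTop (nhds 0)) := by
  have hf' : Differentiable ℝ (deriv f) := hf.differentiable_deriv_two
  have hf'0 : deriv f 0 = 0 := Function.Even.deriv_zero fun x => (heven x).symm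
  have hdescent : ∀ x : ℝ, x ≠ 0 → |x - η * deriv f x| < |x| := by
    intro x hx
    obtain ⟨c, hc0, hc⟩ := exists_ne_zero_deriv_mul_eq_sub hf' hx
    rw [hf'0, sub_zero] at hc
    rw [hc, hη]
    exact abs_sub_two_div_mul_lt (hpos c) (hstrict c 0 (by rwa [abs_zero, abs_pos])) hx
  refine ⟨hdescent, fun x hx => tendsto_zero_of_norm_map_lt ?_ hdescent (by simp [hf'0]) hx⟩
  exact continuous_id.sub (continuous_const.mul hf'.continuous)

/-- For strictly subquadratic `f` and the critical learning rate
`η = 2 / f''(0)`, every `x ≠ 0` satisfies `|x - η f'(x)| < |x|`, and hence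
gradient descent converges to `0` from any initialization. -/
theorem gd_converges_critical_lr
    (f : ℝ → ℝ) (hf : ContDiff ℝ 2 f)
    (heven : ∀ x : ℝ, f x = f (-x)) (h0 : f 0 = 0)
    (hpos : ∀ x : ℝ, 0 < deriv (deriv f) x)
    (hstrict : ∀ s t : ℝ, |t| < |s| → deriv (deriv f) s < deriv (deriv f) t)
    (η : ℝ) (hη : η = 2 / deriv (deriv f) 0) :
    (∀ x : ℝ, x ≠ 0 → |x - η * deriv f x| < |x|) ∧
    (∀ x : ℕ → ℝ, (∀ t : ℕ, x (t + 1) = x t - η * deriv f (x t)) →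
      Filter.Tendsto x Filter.atTop (nhds 0)) :=
  gd_converges_critical_lr_general f hf heven hpos hstrict η hη
end

section
/- Let f : ℝ → ℝ be twice continuously differentiable, even, with f(0) = 0, f''(x) > 0 for all x, f''(s) < f''(t) whenever |t| < |s|, and lim_{|x|→∞} f''(x) = 0. Fix η > 2/f''(0) and let x_η > 0 be the unique positive solution of η f'(x_η) = 2 x_η. Then there is a set A ⊂ ℝ of Lebesgue measure zero (indeed countable) such that for every initialization x₀ ∉ A, the gradient descent trajectory x_{t+1} = x_t − η f'(x_t) converges to the 2-periodic solution {±x_η}: namely |x_t| → x_η and x_t + x_{t+1} → 0 as t → ∞. -/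
/-!
Write `g = f'` (odd, since `f` is even) and `G z = z - η g z` for the gradient step. The defect
`φ u = η g u - 2u`, which equals `-(x_t + x_{t+1})` at `u = x_t`, is strictly concave on `[0, ∞)`
because `f''` decreases in `|u|`; as `φ 0 = φ x_η = 0`, it is positive on `(0, x_η)` and negative
beyond. Together with the monotonicity of `g`, this makes `u ↦ |η g u - u|`, the map followed by
`|x_t|`, move every `u > 0` strictly closer to `x_η`, and a compactness argument yields
`|x_t| → x_η` as long as the orbit avoids the repelling fixed point `0`. Finally `G` is strictly
convex on `[0, ∞)` and strictly concave on `(-∞, 0]`, so its fibres are finite and the initial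
values whose orbit hits `0` form a countable set.
-/

open Filter Set Topology

lemma Function.Odd.abs_apply_abs {h : ℝ → ℝ} (hh : h.Odd) (x : ℝ) : |h (|x|)| = |h x| := by
  rcases abs_choice x with hx | hx <;> rw [hx]
  rw [hh.eq, abs_neg]

lemma odd_deriv_of_even {f : ℝ → ℝ} (hf : ∀ x, f x = f (-x)) : (deriv f).Odd := fun x => by
  conv_lhs => rw [show f = fun y => f (-y) from funext hf]
  rw [deriv_comp_neg, neg_neg]

lemma StrictConcaveOn.pos_of_mem_Ioo {φ : ℝ → ℝ} {s : Set ℝ} (hφ : StrictConcaveOn ℝ s φ)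
    {a b u : ℝ} (ha : a ∈ s) (hb : b ∈ s) (hφa : φ a = 0) (hφb : φ b = 0) (hu : u ∈ Ioo a b) :
    0 < φ u := by
  have hab := hu.1.trans hu.2
  have := hφ.lt_on_openSegment ha hb hab.ne (by rwa [openSegment_eq_Ioo hab])
  rwa [hφa, hφb, min_self] at this

lemma StrictConcaveOn.neg_of_lt {φ : ℝ → ℝ} {s : Set ℝ} (hφ : StrictConcaveOn ℝ s φ)
    {a b u : ℝ} (ha : a ∈ s) (hu : u ∈ s) (hφa : φ a = 0) (hφb : φ b = 0) (hab : a < b)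
    (hbu : b < u) : φ u < 0 := by
  have := hφ.lt_on_openSegment ha hu (hab.trans hbu).ne
    (by rw [openSegment_eq_Ioo (hab.trans hbu)]; exact ⟨hab, hbu⟩)
  rw [hφa, hφb, min_lt_iff] at this
  exact this.resolve_left (lt_irrefl 0)

lemma StrictConvexOn.finite_inter_preimage_singleton {h : ℝ → ℝ} {s : Set ℝ}
    (hh : StrictConvexOn ℝ s h) (c : ℝ) : (s ∩ h ⁻¹' {c}).Finite := by
  set F := s ∩ h ⁻¹' {c}
  have no_three : ∀ a ∈ F, ∀ b ∈ F, ∀ d ∈ F, a < b → ¬ b < d := fun a ha b hb d hd hab hbd => by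
    have := hh.lt_on_openSegment ha.1 hd.1 (hab.trans hbd).ne
      (by rw [openSegment_eq_Ioo (hab.trans hbd)]; exact ⟨hab, hbd⟩)
    rw [hb.2, ha.2, hd.2, max_self] at this
    exact lt_irrefl c this
  rcases F.eq_empty_or_nonempty with hF | ⟨a, ha⟩
  · rw [hF]; exact finite_empty
  have below : (F ∩ Iio a).Subsingleton := fun b hb d hd =>
    le_antisymm (not_lt.1 fun hdb => no_three d hd.1 b hb.1 a ha hdb hb.2)
      (not_lt.1 fun hbd => no_three b hb.1 d hd.1 a ha hbd hd.2)
  have above : (F ∩ Ioi a).Subsingleton := fun b hb d hd =>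
    le_antisymm (not_lt.1 fun hdb => no_three a ha d hd.1 b hb.1 hd.2 hdb)
      (not_lt.1 fun hbd => no_three a ha b hb.1 d hd.1 hb.2 hbd)
  refine ((below.finite.union (finite_singleton a)).union above.finite).subset fun b hb => ?_
  rcases lt_trichotomy b a with hba | rfl | hab
  · exact Or.inl (Or.inl ⟨hb, hba⟩)
  · exact Or.inl (Or.inr rfl)
  · exact Or.inr ⟨hb, hab⟩

lemma StrictConcaveOn.finite_inter_preimage_singleton {h : ℝ → ℝ} {s : Set ℝ}
    (hh : StrictConcaveOn ℝ s h) (c : ℝ) : (s ∩ h ⁻¹' {c}).Finite := by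
  simpa [Set.preimage, neg_inj] using hh.neg.finite_inter_preimage_singleton (-c)

lemma Set.Countable.preimage_iterate {α : Type*} {G : α → α} (hG : ∀ c, (G ⁻¹' {c}).Countable)
    {s : Set α} (hs : s.Countable) (n : ℕ) : (G^[n] ⁻¹' s).Countable := by
  induction n with
  | zero => exact hs
  | succ n ih =>
    rw [Function.iterate_succ, preimage_comp, ← biUnion_preimage_singleton]
    exact ih.biUnion fun c _ => hG c

lemma tendsto_of_abs_sub_lt {T : ℝ → ℝ} (hT : Continuous T) {a : ℝ} (ha : 0 < a) (hfix : T a = a)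
    (hcontr : ∀ y, 0 < y → y ≠ a → |T y - a| < |y - a|) {w : ℕ → ℝ}
    (hw : ∀ t, w (t + 1) = T (w t)) (hpos : ∀ t, 0 < w t) : Tendsto w atTop (𝓝 a) := by
  set D : ℕ → ℝ := fun t => |w t - a|
  have hanti : Antitone D := antitone_nat_of_succ_le fun t => by
    by_cases hwa : w t = a
    · simp [D, hw, hwa, hfix]
    · simpa [D, hw] using (hcontr _ (hpos t) hwa).le
  have hbdd : BddBelow (range D) := ⟨0, by rintro _ ⟨t, rfl⟩; exact abs_nonneg _⟩
  set δ := ⨅ t, D t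
  have hD : Tendsto D atTop (𝓝 δ) := tendsto_atTop_ciInf hanti hbdd
  have hbounded : ∀ t, w t ∈ Metric.closedBall a (D 0) := fun t => by
    simpa [Real.dist_eq] using hanti (Nat.zero_le t)
  obtain ⟨v, -, φ, hφ, hwv⟩ := tendsto_subseq_of_bounded Metric.isBounded_closedBall hbounded
  have hv : |v - a| = δ := tendsto_nhds_unique
    (((continuous_id.sub continuous_const).abs.tendsto v).comp hwv) (hD.comp hφ.tendsto_atTop)
  have hTv : |T v - a| = δ := by
    refine tendsto_nhds_unique (((hT.sub continuous_const).abs.tendsto v).comp hwv) ?_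
    have := hD.comp ((tendsto_add_atTop_nat 1).comp hφ.tendsto_atTop)
    simpa [D, Function.comp_def, hw] using this
  have hv0 : 0 < v := by
    refine lt_of_le_of_ne (ge_of_tendsto' hwv fun k => (hpos _).le) fun hv0 => ?_
    -- `v = 0` forces `δ = a`, so every iterate stays at distance `≥ a` from `a`, i.e. beyond `2a`
    have hfar : ∀ t, 2 * a ≤ w t := fun t => by
      have := hanti.le_of_tendsto hD t
      rw [← hv, ← hv0, zero_sub, abs_neg, abs_of_pos ha] at this
      cases abs_cases (w t - a) <;> linarith [hpos t]
    linarith [ge_of_tendsto' hwv fun k => hfar (φ k)]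
  have hva : v = a := by
    by_contra hva
    exact (hcontr v hv0 hva).ne (hTv.trans hv.symm)
  have hδ : δ = 0 := by rw [← hv, hva, sub_self, abs_zero]
  rw [hδ] at hD
  exact tendsto_sub_nhds_zero_iff.1 ((tendsto_zero_iff_abs_tendsto_zero _).2 hD)

section GradientDescent

variable {g : ℝ → ℝ} {η a : ℝ}

lemma strictConcaveOn_mul_sub_two_mul (hg : Differentiable ℝ g) (hη : 0 < η)
    (hanti : StrictAntiOn (deriv g) (Ici 0)) :
    StrictConcaveOn ℝ (Ici 0) fun u => η * g u - 2 * u := by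
  have hgc := hg.continuous
  refine StrictAntiOn.strictConcaveOn_of_deriv (convex_Ici 0) (by fun_prop) ?_
  rw [interior_Ici]
  intro y hy z hz hyz
  have hderiv : ∀ u, deriv (fun u => η * g u - 2 * u) u = η * deriv g u - 2 := fun u =>
    (((hg u).hasDerivAt.const_mul η).sub ((hasDerivAt_id u).const_mul 2)).deriv.trans (by ring)
  simp only [hderiv]
  have := mul_lt_mul_of_pos_left (hanti (mem_Ici_of_Ioi hy) (mem_Ici_of_Ioi hz) hyz) hη
  linarith

lemma deriv_sub_mul (hg : Differentiable ℝ g) (u : ℝ) :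
    deriv (fun z => z - η * g z) u = 1 - η * deriv g u :=
  ((hasDerivAt_id u).sub ((hg u).hasDerivAt.const_mul η)).deriv

lemma strictConvexOn_sub_mul (hg : Differentiable ℝ g) (hη : 0 < η)
    (hanti : StrictAntiOn (deriv g) (Ici 0)) :
    StrictConvexOn ℝ (Ici 0) fun z => z - η * g z := by
  have hgc := hg.continuous
  refine StrictMonoOn.strictConvexOn_of_deriv (convex_Ici 0) (by fun_prop) ?_
  rw [interior_Ici]
  intro y hy z hz hyz
  simp only [deriv_sub_mul hg]
  have := mul_lt_mul_of_pos_left (hanti (mem_Ici_of_Ioi hy) (mem_Ici_of_Ioi hz) hyz) hη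
  linarith

lemma strictConcaveOn_sub_mul (hg : Differentiable ℝ g) (hη : 0 < η)
    (hmono : StrictMonoOn (deriv g) (Iic 0)) :
    StrictConcaveOn ℝ (Iic 0) fun z => z - η * g z := by
  have hgc := hg.continuous
  refine StrictAntiOn.strictConcaveOn_of_deriv (convex_Iic 0) (by fun_prop) ?_
  rw [interior_Iic]
  intro y hy z hz hyz
  simp only [deriv_sub_mul hg]
  have := mul_lt_mul_of_pos_left (hmono (mem_Iic_of_Iio hy) (mem_Iic_of_Iio hz) hyz) hη
  linarith

lemma finite_preimage_singleton_sub_mul (hg : Differentiable ℝ g) (hη : 0 < η)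
    (hanti : StrictAntiOn (deriv g) (Ici 0)) (hmono : StrictMonoOn (deriv g) (Iic 0)) (c : ℝ) :
    ((fun z => z - η * g z) ⁻¹' {c}).Finite := by
  refine (((strictConvexOn_sub_mul hg hη hanti).finite_inter_preimage_singleton c).union
    ((strictConcaveOn_sub_mul hg hη hmono).finite_inter_preimage_singleton c)).subset
    fun z hz => ?_
  rcases le_total 0 z with h | h
  · exact Or.inl ⟨h, hz⟩
  · exact Or.inr ⟨h, hz⟩

lemma abs_mul_sub_sub_lt_abs_sub (hg : Differentiable ℝ g) (hg0 : g 0 = 0) (hgmono : StrictMono g)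
    (hanti : StrictAntiOn (deriv g) (Ici 0)) (hη : 0 < η) (ha : 0 < a) (hga : η * g a = 2 * a)
    {u : ℝ} (hu : 0 < u) (hua : u ≠ a) : |η * g u - u - a| < |u - a| := by
  have hφ := strictConcaveOn_mul_sub_two_mul hg hη hanti
  have hφ0 : η * g 0 - 2 * 0 = 0 := by rw [hg0]; ring
  have hφa : η * g a - 2 * a = 0 := by rw [hga]; ring
  rcases hua.lt_or_gt with hlt | hgt
  · have hpos : 0 < η * g u - 2 * u :=
      hφ.pos_of_mem_Ioo self_mem_Ici ha.le hφ0 hφa ⟨hu, hlt⟩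
    have := mul_lt_mul_of_pos_left (hgmono hlt) hη
    rw [abs_of_neg (sub_neg.2 hlt), abs_lt]
    constructor <;> linarith
  · have hneg : η * g u - 2 * u < 0 :=
      hφ.neg_of_lt self_mem_Ici hu.le hφ0 hφa ha hgt
    have := mul_lt_mul_of_pos_left (hgmono hgt) hη
    rw [abs_of_pos (sub_pos.2 hgt), abs_lt]
    constructor <;> linarith

lemma tendsto_abs_of_gd_orbit (hg : Differentiable ℝ g) (hodd : g.Odd) (hgmono : StrictMono g)
    (hanti : StrictAntiOn (deriv g) (Ici 0)) (hη : 0 < η) (ha : 0 < a) (hga : η * g a = 2 * a)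
    {x : ℕ → ℝ} (hx : ∀ t, x (t + 1) = x t - η * g (x t)) (hne : ∀ t, x t ≠ 0) :
    Tendsto (fun t => |x t|) atTop (𝓝 a) := by
  have hSodd : Function.Odd fun u => η * g u - u := fun u => by
    simp only [hodd.eq]; ring
  have hgc := hg.continuous
  refine tendsto_of_abs_sub_lt (T := fun w => |η * g w - w|) (by fun_prop) ha
    (by rw [hga, two_mul, add_sub_cancel_right, abs_of_pos ha]) (fun y hy hya => ?_)
    (fun t => ?_) (fun t => abs_pos.2 (hne t))
  · calc |(|η * g y - y|) - a| ≤ |η * g y - y - a| := by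
          simpa [abs_of_pos ha] using abs_abs_sub_abs_le_abs_sub (η * g y - y) a
      _ < |y - a| := abs_mul_sub_sub_lt_abs_sub hg hodd.map_zero hgmono hanti hη ha hga hy hya
  · rw [hx, hSodd.abs_apply_abs, ← abs_neg]
    ring_nf

lemma tendsto_add_succ_of_tendsto_abs (hg : Continuous g) (hodd : g.Odd) (hga : η * g a = 2 * a)
    {x : ℕ → ℝ} (hx : ∀ t, x (t + 1) = x t - η * g (x t))
    (habs : Tendsto (fun t => |x t|) atTop (𝓝 a)) :
    Tendsto (fun t => x t + x (t + 1)) atTop (𝓝 0) := by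
  have hφodd : Function.Odd fun u => η * g u - 2 * u := fun u => by
    simp only [hodd.eq]; ring
  have hlim : Tendsto (fun t => |η * g (|x t|) - 2 * (|x t|)|) atTop (𝓝 0) := by
    simpa [Function.comp_def, hga] using
      ((show Continuous fun u => |η * g u - 2 * u| by fun_prop).tendsto a).comp habs
  refine (tendsto_zero_iff_abs_tendsto_zero _).2 (hlim.congr fun t => ?_)
  rw [hφodd.abs_apply_abs, Function.comp_apply, hx, ← abs_neg]
  ring_nf

end GradientDescent

theorem gd_converges_to_two_periodic_solution_general
    (f : ℝ → ℝ) (hf : ContDiff ℝ 2 f)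
    (heven : ∀ x : ℝ, f x = f (-x))
    (hpos : ∀ x : ℝ, 0 < deriv (deriv f) x)
    (hstrict : ∀ s t : ℝ, |t| < |s| → deriv (deriv f) s < deriv (deriv f) t)
    (η : ℝ)
    (xη : ℝ) (hxη : 0 < xη) (heq : η * deriv f xη = 2 * xη) :
    ∃ A : Set ℝ, A.Countable ∧ MeasureTheory.volume A = 0 ∧
      ∀ x₀ : ℝ, x₀ ∉ A → ∀ x : ℕ → ℝ, x 0 = x₀ →
        (∀ t : ℕ, x (t + 1) = x t - η * deriv f (x t)) →
        Filter.Tendsto (fun t => |x t|) Filter.atTop (nhds xη) ∧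
        Filter.Tendsto (fun t => x t + x (t + 1)) Filter.atTop (nhds 0) := by
  have hg : Differentiable ℝ (deriv f) := hf.differentiable_deriv_two
  have hodd : (deriv f).Odd := odd_deriv_of_even heven
  have hgmono : StrictMono (deriv f) := strictMono_of_deriv_pos hpos
  have hanti : StrictAntiOn (deriv (deriv f)) (Ici 0) := fun y hy z hz hyz =>
    hstrict z y (by rwa [abs_of_nonneg hy, abs_of_nonneg (le_trans hy hyz.le)])
  have hmono : StrictMonoOn (deriv (deriv f)) (Iic 0) := fun y hy z hz hyz =>
    hstrict y z (by rw [abs_of_nonpos hz, abs_of_nonpos (hyz.le.trans hz)]; linarith)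
  have hη : 0 < η := by
    have hgxη : 0 < deriv f xη := hodd.map_zero ▸ hgmono hxη
    exact pos_of_mul_pos_left (by rw [heq]; positivity) hgxη.le
  set G := fun z => z - η * deriv f z
  have hA : (⋃ t : ℕ, G^[t] ⁻¹' {0}).Countable := countable_iUnion fun t =>
    (countable_singleton 0).preimage_iterate
      (fun c => (finite_preimage_singleton_sub_mul hg hη hanti hmono c).countable) t
  refine ⟨_, hA, hA.measure_zero _, fun x₀ hx₀ x hx0 hx => ?_⟩
  have horbit : ∀ t, x t = G^[t] x₀ := fun t => by
    induction t with
    | zero => exact hx0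
    | succ t ih => rw [Function.iterate_succ_apply', ← ih, hx]
  have hne : ∀ t, x t ≠ 0 := fun t hxt => hx₀ (mem_iUnion.2 ⟨t, by simp [← horbit, hxt]⟩)
  have habs := tendsto_abs_of_gd_orbit hg hodd hgmono hanti hη hxη heq hx hne
  exact ⟨habs, tendsto_add_succ_of_tendsto_abs hg.continuous hodd heq hx habs⟩

/-- For strictly subquadratic `f` with `f'' → 0` at infinity,
`η > 2/f''(0)` and the unique positive solution `x_η` of `η f'(x_η) = 2 x_η`,
there is a countable (hence Lebesgue-null) set `A ⊆ ℝ` such that for every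
initialization `x₀ ∉ A` the gradient descent trajectory converges to the
2-periodic solution `{± x_η}`: `|x_t| → x_η` and `x_t + x_{t+1} → 0`. -/
theorem gd_converges_to_two_periodic_solution
    (f : ℝ → ℝ) (hf : ContDiff ℝ 2 f)
    (heven : ∀ x : ℝ, f x = f (-x)) (h0 : f 0 = 0)
    (hpos : ∀ x : ℝ, 0 < deriv (deriv f) x)
    (hstrict : ∀ s t : ℝ, |t| < |s| → deriv (deriv f) s < deriv (deriv f) t)
    (hlim : Filter.Tendsto (deriv (deriv f)) (Filter.cocompact ℝ) (nhds 0))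
    (η : ℝ) (hη : 2 / deriv (deriv f) 0 < η)
    (xη : ℝ) (hxη : 0 < xη) (heq : η * deriv f xη = 2 * xη)
    (huniq : ∀ y : ℝ, 0 < y → η * deriv f y = 2 * y → y = xη) :
    ∃ A : Set ℝ, A.Countable ∧ MeasureTheory.volume A = 0 ∧
      ∀ x₀ : ℝ, x₀ ∉ A → ∀ x : ℕ → ℝ, x 0 = x₀ →
        (∀ t : ℕ, x (t + 1) = x t - η * deriv f (x t)) →
        Filter.Tendsto (fun t => |x t|) Filter.atTop (nhds xη) ∧
        Filter.Tendsto (fun t => x t + x (t + 1)) Filter.atTop (nhds 0) :=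
  gd_converges_to_two_periodic_solution_general f hf heven hpos hstrict η xη hxη heq
end

section
/- Let {p₁, …, p_n} be an orthonormal basis of ℝⁿ and let each f_i : ℝ → ℝ be twice continuously differentiable, even, with f_i(0) = 0, f_i''(x) > 0, f_i''(s) < f_i''(t) whenever |t| < |s|, and f_i''(x) → 0 as |x| → ∞. Define f(x) = Σ_{i=1}^n f_i(p_iᵀ x), fix η > 0, and let x₀, x₁, … be the gradient descent trajectory x_{t+1} = x_t − η ∇f(x_t). Then, except for a Lebesgue-null set of initializations x₀ ∈ ℝⁿ, for each i the component z_t^{(i)} = p_iᵀ x_t converges to 0 if η ≤ 2/f_i''(0), and otherwise converges to the 2-periodic solution {± x_η^{(i)}} (i.e. |z_t^{(i)}| → x_η^{(i)} and z_t^{(i)} + z_{t+1}^{(i)} → 0), where x_η^{(i)} > 0 is the unique positive solution of η f_i'(x_η^{(i)}) = 2 x_η^{(i)}. -/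
/-!
Along the eigendirection `p i` gradient descent is the one-dimensional map `z ↦ z - ψ z` with
`ψ = η fᵢ'`. This `ψ` is odd, and strictly concave on `[0, ∞)` because `fᵢ''` decreases in `|x|`;
so `ψ u / u` decreases strictly on `(0, ∞)`, starting from `ψ' 0 = η fᵢ''(0)`.

If `ψ' 0 ≤ 2`, then `0 < ψ u < 2 u` for `u > 0`, so `|z|` strictly decreases and every orbit
tends to `0`. If `ψ' 0 > 2`, then `ψ x = 2 x` has a unique positive root `x_η`, and
`||z| - x_η|` is a Lyapunov function, strictly decreasing off `{0, ± x_η}`; an orbit that never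
hits the fixed point `0` thus converges to the 2-cycle `{± x_η}`. The map is strictly monotone
on each of three intervals, so only countably many starting values ever hit `0`; their preimage
under `⟪p i, ·⟫` is a countable union of hyperplanes, a null set.
-/

open scoped RealInnerProductSpace

open Filter Set Topology Function MeasureTheory

theorem Function.Even.deriv {𝕜 F : Type*} [NontriviallyNormedField 𝕜] [NormedAddCommGroup F]
    [NormedSpace 𝕜 F] {g : 𝕜 → F} (hg : g.Even) : (deriv g).Odd := fun x => by
  have h := deriv_comp_neg g (-x)
  rwa [show (fun y => g (-y)) = g from funext hg, neg_neg] at h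

theorem Function.Odd.abs_apply_abs_s10 {α β : Type*} [AddGroup α] [LinearOrder α] [AddGroup β]
    [LinearOrder β] {h : α → β} (hh : h.Odd) (y : α) : |h (|y|)| = |h y| := by
  rcases abs_choice y with hy | hy <;> rw [hy]
  rw [hh y, abs_neg]

theorem exists_subseq_tendsto_apply_eq_of_antitone {X : Type*} [PseudoMetricSpace X]
    [ProperSpace X] {T : X → X} {V : X → ℝ} (hT : Continuous T) (hV : Continuous V) {x : X}
    (hbdd : Bornology.IsBounded (range fun t => T^[t] x))
    (hanti : Antitone fun t => V (T^[t] x)) :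
    ∃ a, ∃ φ : ℕ → ℕ, StrictMono φ ∧ Tendsto (fun k => T^[φ k] x) atTop (𝓝 a) ∧
      Tendsto (fun t => V (T^[t] x)) atTop (𝓝 (V a)) ∧ V (T a) = V a := by
  obtain ⟨a, -, φ, hφ, ha⟩ := tendsto_subseq_of_bounded hbdd fun t => mem_range_self t
  have hV_lim : Tendsto (fun t => V (T^[t] x)) atTop (𝓝 (V a)) :=
    (tendsto_iff_tendsto_subseq_of_antitone hanti hφ.tendsto_atTop).2 ((hV.tendsto a).comp ha)
  have hV_succ : Tendsto (fun k => V (T^[φ k + 1] x)) atTop (𝓝 (V (T a))) := by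
    simpa only [iterate_succ_apply', comp_def] using (hV.tendsto _).comp ((hT.tendsto a).comp ha)
  exact ⟨a, φ, hφ, ha, hV_lim, tendsto_nhds_unique hV_succ
    (hV_lim.comp ((tendsto_add_atTop_nat 1).comp hφ.tendsto_atTop))⟩

theorem Set.Countable.iUnion_preimage_iterate {α : Type*} {T : α → α}
    (hT : ∀ s : Set α, s.Countable → (T ⁻¹' s).Countable) {B : Set α} (hB : B.Countable) :
    (⋃ t, T^[t] ⁻¹' B).Countable := by
  refine countable_iUnion fun t => ?_
  induction t with
  | zero => exact hB
  | succ t ih => rw [iterate_succ, preimage_comp]; exact hT _ ih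

section Hyperplane

variable {E : Type*} [NormedAddCommGroup E] [InnerProductSpace ℝ E] [FiniteDimensional ℝ E]
  [MeasurableSpace E] [BorelSpace E] (μ : Measure E) [μ.IsAddHaarMeasure]

theorem measure_setOf_inner_eq_zero {u : E} (hu : u ≠ 0) (s : ℝ) : μ {x | ⟪u, x⟫ = s} = 0 := by
  let H : AffineSubspace ℝ E :=
    (AffineSubspace.mk' s ⊥).comap (innerSL ℝ u).toLinearMap.toAffineMap
  have hH : (H : Set E) = {x | ⟪u, x⟫ = s} := by
    ext x; simp [H, AffineSubspace.mem_mk', sub_eq_zero]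
  rw [← hH]
  refine Measure.addHaar_affineSubspace μ H fun htop => hu ?_
  have hall : ∀ x : E, ⟪u, x⟫ = s := fun x => by
    have hx : x ∈ (H : Set E) := htop ▸ AffineSubspace.mem_top ℝ E x
    rwa [hH] at hx
  rw [← inner_self_eq_zero (𝕜 := ℝ), hall u, ← hall 0, inner_zero_right]

theorem measure_setOf_inner_mem_eq_zero {u : E} (hu : u ≠ 0) {S : Set ℝ} (hS : S.Countable) :
    μ {x | ⟪u, x⟫ ∈ S} = 0 := by
  have hS_union : {x | ⟪u, x⟫ ∈ S} = ⋃ s ∈ S, {x | ⟪u, x⟫ = s} := by ext; simp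
  rw [hS_union, measure_biUnion_null_iff hS]
  exact fun s _ => measure_setOf_inner_eq_zero μ hu s

end Hyperplane

def gdStep (ψ : ℝ → ℝ) (y : ℝ) : ℝ := y - ψ y

section Gradient

variable {ι E : Type*} [Fintype ι] [NormedAddCommGroup E] [InnerProductSpace ℝ E]
  [CompleteSpace E]

theorem hasGradientAt_sum_comp_inner (v : ι → E) {f : ι → ℝ → ℝ} {x : E}
    (hf : ∀ i, DifferentiableAt ℝ (f i) ⟪v i, x⟫) :
    HasGradientAt (fun y => ∑ i, f i ⟪v i, y⟫) (∑ i, deriv (f i) ⟪v i, x⟫ • v i) x := by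
  rw [hasGradientAt_iff_hasFDerivAt, map_sum]
  refine HasFDerivAt.fun_sum fun i _ => ?_
  rw [map_smul]
  exact (hf i).hasDerivAt.comp_hasFDerivAt x (InnerProductSpace.toDual ℝ E (v i)).hasFDerivAt

theorem inner_gd_eq_iterate_gdStep (p : OrthonormalBasis ι ℝ E) {f : ι → ℝ → ℝ}
    (hf : ∀ i, Differentiable ℝ (f i)) {F : E → ℝ} (hF : ∀ x, F x = ∑ i, f i ⟪p i, x⟫)
    {η : ℝ} {x : ℕ → E} (hx : ∀ t, x (t + 1) = x t - η • gradient F (x t)) (i : ι) (t : ℕ) :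
    ⟪p i, x t⟫ = (gdStep fun y => η * deriv (f i) y)^[t] ⟪p i, x 0⟫ := by
  induction t with
  | zero => rfl
  | succ t ih =>
    have hgrad : gradient F (x t) = ∑ j, deriv (f j) ⟪p j, x t⟫ • p j := by
      rw [show F = _ from funext hF]
      exact (hasGradientAt_sum_comp_inner p fun j => hf j _).gradient
    rw [iterate_succ_apply', ← ih, hx, inner_sub_right, real_inner_smul_right, hgrad,
      p.orthonormal.inner_right_fintype]
    rfl

end Gradient

namespace EdgeOfStability

variable {ψ : ℝ → ℝ}

theorem odd_gdStep (hodd : ψ.Odd) : (gdStep ψ).Odd := fun y => by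
  simp only [gdStep, hodd y]; ring

theorem continuous_gdStep (hψ : Continuous ψ) : Continuous (gdStep ψ) := continuous_id.sub hψ

theorem slope_zero_eq_div (hodd : ψ.Odd) (u : ℝ) : slope ψ 0 u = ψ u / u := by
  simp [slope_def_field, hodd.map_zero]

theorem strictConcaveOn_Ici_zero (hψ : Continuous ψ)
    (hstr : ∀ s t : ℝ, |t| < |s| → deriv ψ s < deriv ψ t) : StrictConcaveOn ℝ (Ici 0) ψ := by
  refine StrictAntiOn.strictConcaveOn_of_deriv (convex_Ici 0) hψ.continuousOn ?_
  rw [interior_Ici]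
  intro s hs t ht hst
  exact hstr t s (by rwa [abs_of_pos hs, abs_of_pos ht])

theorem div_lt_deriv_zero (hψ : Differentiable ℝ ψ) (hodd : ψ.Odd)
    (hstr : ∀ s t : ℝ, |t| < |s| → deriv ψ s < deriv ψ t) {u : ℝ} (hu : 0 < u) :
    ψ u / u < deriv ψ 0 := by
  rw [← slope_zero_eq_div hodd]
  exact (strictConcaveOn_Ici_zero hψ.continuous hstr).slope_lt_deriv self_mem_Ici hu.le hu (hψ 0)

theorem deriv_lt_div (hψ : Differentiable ℝ ψ) (hodd : ψ.Odd)
    (hstr : ∀ s t : ℝ, |t| < |s| → deriv ψ s < deriv ψ t) {u : ℝ} (hu : 0 < u) :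
    deriv ψ u < ψ u / u := by
  rw [← slope_zero_eq_div hodd]
  exact (strictConcaveOn_Ici_zero hψ.continuous hstr).deriv_lt_slope self_mem_Ici hu.le hu (hψ u)

theorem strictAntiOn_div (hψ : Continuous ψ) (hodd : ψ.Odd)
    (hstr : ∀ s t : ℝ, |t| < |s| → deriv ψ s < deriv ψ t) :
    StrictAntiOn (fun u => ψ u / u) (Ioi 0) := by
  intro a (ha : 0 < a) b (hb : 0 < b) hab
  simpa [slope_def_field, hodd.map_zero] using (strictConcaveOn_Ici_zero hψ hstr).secant_strict_mono
    self_mem_Ici (mem_Ici.2 ha.le) (mem_Ici.2 hb.le) ha.ne' hb.ne' hab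

theorem abs_gdStep_lt_abs (hψ : Differentiable ℝ ψ) (hodd : ψ.Odd)
    (hpos : ∀ x, 0 < deriv ψ x) (hstr : ∀ s t : ℝ, |t| < |s| → deriv ψ s < deriv ψ t)
    (h2 : deriv ψ 0 ≤ 2) {y : ℝ} (hy : y ≠ 0) : |gdStep ψ y| < |y| := by
  have hu : 0 < |y| := abs_pos.2 hy
  have hψu : 0 < ψ |y| := hodd.map_zero ▸ strictMono_of_deriv_pos hpos hu
  have hlt : ψ |y| < 2 * |y| := by
    have := div_lt_deriv_zero hψ hodd hstr hu
    rw [div_lt_iff₀ hu] at this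
    nlinarith
  rw [← (odd_gdStep hodd).abs_apply_abs_s10, gdStep, abs_lt]
  constructor <;> linarith

theorem tendsto_iterate_gdStep_zero (hψ : Differentiable ℝ ψ) (hodd : ψ.Odd)
    (hpos : ∀ x, 0 < deriv ψ x) (hstr : ∀ s t : ℝ, |t| < |s| → deriv ψ s < deriv ψ t)
    (h2 : deriv ψ 0 ≤ 2) (z : ℝ) : Tendsto (fun t => (gdStep ψ)^[t] z) atTop (𝓝 0) := by
  have hstep : ∀ y, |gdStep ψ y| ≤ |y| := fun y => by
    rcases eq_or_ne y 0 with rfl | hy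
    · simp [gdStep, hodd.map_zero]
    · exact (abs_gdStep_lt_abs hψ hodd hpos hstr h2 hy).le
  have hanti : Antitone fun t => |(gdStep ψ)^[t] z| :=
    antitone_nat_of_succ_le fun t => by rw [iterate_succ_apply']; exact hstep _
  have hbdd : Bornology.IsBounded (range fun t => (gdStep ψ)^[t] z) := by
    refine (Metric.isBounded_closedBall (x := 0) (r := |z|)).subset ?_
    rintro _ ⟨t, rfl⟩
    simpa using hanti (Nat.zero_le t)
  obtain ⟨a, -, -, -, hlim, hinv⟩ := exists_subseq_tendsto_apply_eq_of_antitone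
    (continuous_gdStep hψ.continuous) continuous_abs hbdd hanti
  obtain rfl : a = 0 := by
    by_contra ha
    exact (abs_gdStep_lt_abs hψ hodd hpos hstr h2 ha).ne hinv
  rw [abs_zero] at hlim
  exact (tendsto_zero_iff_abs_tendsto_zero _).2 hlim

theorem exists_pos_deriv_eq (hψ' : Continuous (deriv ψ))
    (hlim : Tendsto (deriv ψ) (cocompact ℝ) (𝓝 0)) {y : ℝ} (hy0 : 0 < y) (hy : y < deriv ψ 0) :
    ∃ c, 0 < c ∧ deriv ψ c = y := by
  obtain ⟨R, hRy, hR⟩ : ∃ R, deriv ψ R < y ∧ 0 ≤ R :=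
    (((hlim.eventually (gt_mem_nhds hy0)).filter_mono atTop_le_cocompact).and
      (eventually_ge_atTop 0)).exists
  obtain ⟨c, hc, hcy⟩ := intermediate_value_Icc' hR hψ'.continuousOn ⟨hRy.le, hy.le⟩
  refine ⟨c, hc.1.lt_of_ne ?_, hcy⟩
  rintro rfl
  exact hy.ne' hcy

theorem existsUnique_pos_apply_eq_two_mul (hψ : Differentiable ℝ ψ)
    (hψ' : Continuous (deriv ψ)) (hodd : ψ.Odd) (hpos : ∀ x, 0 < deriv ψ x)
    (hstr : ∀ s t : ℝ, |t| < |s| → deriv ψ s < deriv ψ t)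
    (hlim : Tendsto (deriv ψ) (cocompact ℝ) (𝓝 0)) (h2 : 2 < deriv ψ 0) :
    ∃ xe, 0 < xe ∧ ψ xe = 2 * xe ∧ ∀ y, 0 < y → ψ y = 2 * y → y = xe := by
  have hconc := strictConcaveOn_Ici_zero hψ.continuous hstr
  obtain ⟨c₂, hc₂, hψ'c₂⟩ := exists_pos_deriv_eq hψ' hlim two_pos h2
  have hlow : 0 ≤ ψ c₂ - 2 * c₂ := by
    have := deriv_lt_div hψ hodd hstr hc₂
    rw [hψ'c₂, lt_div_iff₀ hc₂] at this
    linarith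
  obtain ⟨c₁, hc₁, hψ'c₁⟩ := exists_pos_deriv_eq hψ' hlim one_pos (by linarith)
  have hψc₁ : 0 < ψ c₁ := hodd.map_zero ▸ strictMono_of_deriv_pos hpos hc₁
  -- `ψ` lies below its tangent at `c₁`, of slope `1`, hence below `2 * id` from `c₁ + ψ c₁` on
  have hup : ψ (c₁ + ψ c₁) - 2 * (c₁ + ψ c₁) ≤ 0 := by
    have := hconc.slope_lt_deriv (y := c₁ + ψ c₁) (mem_Ici.2 hc₁.le) (mem_Ici.2 (by linarith))
      (by linarith) (hψ c₁)
    rw [hψ'c₁, slope_def_field, add_sub_cancel_left, div_lt_one hψc₁] at this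
    linarith
  obtain ⟨xe, hxe : 0 < xe, hfix⟩ := isPreconnected_Ioi.intermediate_value
    (f := fun v => ψ v - 2 * v) (mem_Ioi.2 (by linarith)) (mem_Ioi.2 hc₂)
    ((hψ.continuous.sub (continuous_const.mul continuous_id)).continuousOn) ⟨hup, hlow⟩
  have hfix : ψ xe = 2 * xe := sub_eq_zero.1 hfix
  refine ⟨xe, hxe, hfix, fun y hy hψy => (strictAntiOn_div hψ.continuous hodd hstr).injOn hy hxe ?_⟩
  simp only [hψy, hfix, mul_div_assoc, div_self hy.ne', div_self hxe.ne']

theorem abs_abs_gdStep_sub_lt (hψ : Differentiable ℝ ψ) (hodd : ψ.Odd)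
    (hpos : ∀ x, 0 < deriv ψ x) (hstr : ∀ s t : ℝ, |t| < |s| → deriv ψ s < deriv ψ t)
    {xe : ℝ} (hxe : 0 < xe) (hfix : ψ xe = 2 * xe) {y : ℝ} (hy : y ≠ 0) (hne : |y| ≠ xe) :
    |(|gdStep ψ y|) - xe| < |(|y|) - xe| := by
  rw [← (odd_gdStep hodd).abs_apply_abs_s10]
  have hu : 0 < |y| := abs_pos.2 hy
  set u := |y|
  have hratio := strictAntiOn_div hψ.continuous hodd hstr
  have hinc := strictMono_of_deriv_pos hpos
  have hfix' : ψ xe / xe = 2 := by rw [hfix, mul_div_assoc, div_self hxe.ne', mul_one]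
  simp only [gdStep]
  rcases hne.lt_or_gt with h | h
  · have h1 : 2 * u < ψ u := by
      have : ψ xe / xe < ψ u / u := hratio hu hxe h
      rwa [hfix', lt_div_iff₀ hu] at this
    have h2 : ψ u < 2 * xe := hfix ▸ hinc h
    rw [abs_of_neg (by linarith : u - ψ u < 0), abs_of_neg (sub_neg.2 h), abs_lt]
    constructor <;> linarith
  · have h1 : ψ u < 2 * u := by
      have : ψ u / u < ψ xe / xe := hratio hxe hu h
      rwa [hfix', div_lt_iff₀ hu] at this
    have h2 : 2 * xe < ψ u := hfix ▸ hinc h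
    have h3 : |u - ψ u| < u := abs_lt.2 ⟨by linarith, by linarith⟩
    rw [abs_of_pos (sub_pos.2 h), abs_lt]
    constructor <;> linarith [neg_abs_le (u - ψ u)]

theorem abs_abs_gdStep_sub_le (hψ : Differentiable ℝ ψ) (hodd : ψ.Odd)
    (hpos : ∀ x, 0 < deriv ψ x) (hstr : ∀ s t : ℝ, |t| < |s| → deriv ψ s < deriv ψ t)
    {xe : ℝ} (hxe : 0 < xe) (hfix : ψ xe = 2 * xe) {y : ℝ} (hy : y ≠ 0) :
    |(|gdStep ψ y|) - xe| ≤ |(|y|) - xe| := by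
  rcases eq_or_ne |y| xe with h | h
  · rw [← (odd_gdStep hodd).abs_apply_abs_s10, h, gdStep, hfix, sub_self, abs_zero,
      show xe - 2 * xe = -xe by ring, abs_neg, abs_of_pos hxe, sub_self, abs_zero]
  · exact (abs_abs_gdStep_sub_lt hψ hodd hpos hstr hxe hfix hy h).le

theorem tendsto_abs_iterate_gdStep (hψ : Differentiable ℝ ψ) (hodd : ψ.Odd)
    (hpos : ∀ x, 0 < deriv ψ x) (hstr : ∀ s t : ℝ, |t| < |s| → deriv ψ s < deriv ψ t)
    {xe : ℝ} (hxe : 0 < xe) (hfix : ψ xe = 2 * xe) {z : ℝ}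
    (hz : ∀ t, (gdStep ψ)^[t] z ≠ 0) :
    Tendsto (fun t => |(gdStep ψ)^[t] z|) atTop (𝓝 xe) := by
  have hanti : Antitone fun t => |(|(gdStep ψ)^[t] z|) - xe| :=
    antitone_nat_of_succ_le fun t => by
      rw [iterate_succ_apply']
      exact abs_abs_gdStep_sub_le hψ hodd hpos hstr hxe hfix (hz t)
  have hbdd : Bornology.IsBounded (range fun t => (gdStep ψ)^[t] z) := by
    refine (Metric.isBounded_closedBall (x := 0) (r := xe + |(|z|) - xe|)).subset ?_
    rintro _ ⟨t, rfl⟩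
    have h := hanti (Nat.zero_le t)
    simp only [iterate_zero, id] at h
    rw [mem_closedBall_zero_iff, Real.norm_eq_abs]
    linarith [le_abs_self (|(gdStep ψ)^[t] z| - xe)]
  obtain ⟨a, φ, -, ha, hlim, hinv⟩ := exists_subseq_tendsto_apply_eq_of_antitone
    (V := fun y => |(|y|) - xe|) (continuous_gdStep hψ.continuous) (by fun_prop) hbdd hanti
  -- The orbit cannot accumulate at the fixed point `0`: the limit `||0| - xe| = xe` would bound
  -- `||z_t| - xe|` from below, which keeps `z_t ≠ 0` outside `(-2 xe, 2 xe)`.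
  have ha0 : a ≠ 0 := by
    rintro rfl
    have hfar : ∀ t, 2 * xe ≤ |(gdStep ψ)^[t] z| := fun t => by
      have h := hanti.le_of_tendsto hlim t
      rw [abs_zero, zero_sub, abs_neg, abs_of_pos hxe] at h
      rcases le_abs'.1 h with h' | h'
      · linarith [abs_pos.2 (hz t)]
      · linarith
    have := ge_of_tendsto' ha.abs fun k => hfar (φ k)
    rw [abs_zero] at this
    linarith
  have ha_xe : |a| = xe := by
    by_contra hne
    exact (abs_abs_gdStep_sub_lt hψ hodd hpos hstr hxe hfix ha0 hne).ne hinv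
  rw [ha_xe, sub_self, abs_zero] at hlim
  rw [tendsto_iff_norm_sub_tendsto_zero]
  simpa only [Real.norm_eq_abs] using hlim

theorem tendsto_add_gdStep (hψ : Continuous ψ) (hodd : ψ.Odd) {xe : ℝ} (hfix : ψ xe = 2 * xe)
    {w : ℕ → ℝ} (hw : Tendsto (fun t => |w t|) atTop (𝓝 xe)) :
    Tendsto (fun t => w t + gdStep ψ (w t)) atTop (𝓝 0) := by
  let h : ℝ → ℝ := fun u => u + gdStep ψ u
  have hodd_h : h.Odd := fun u => by simp only [h, odd_gdStep hodd u, neg_add]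
  have hcont : Continuous fun u => |h u| :=
    continuous_abs.comp (continuous_id.add (continuous_gdStep hψ))
  have hlim := (hcont.tendsto xe).comp hw
  have hhxe : h xe = 0 := by simp only [h, gdStep, hfix]; ring
  simp only [comp_def, hodd_h.abs_apply_abs_s10, hhxe, abs_zero] at hlim
  exact (tendsto_zero_iff_abs_tendsto_zero _).2 hlim

theorem gdStep_piecewise_strictMono (hψ : Differentiable ℝ ψ)
    (hstr : ∀ s t : ℝ, |t| < |s| → deriv ψ s < deriv ψ t) {c : ℝ} (hc : 0 < c)
    (hψ'c : deriv ψ c = 1) :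
    StrictMonoOn (gdStep ψ) (Iic (-c)) ∧ StrictAntiOn (gdStep ψ) (Icc (-c) c) ∧
      StrictMonoOn (gdStep ψ) (Ici c) := by
  have hcont := continuous_gdStep hψ.continuous
  have hderiv : ∀ v, deriv (gdStep ψ) v = 1 - deriv ψ v := fun v =>
    ((hasDerivAt_id v).sub (hψ v).hasDerivAt).deriv
  have hpos : ∀ v, c < |v| → 0 < deriv (gdStep ψ) v := fun v hv => by
    have := hstr v c (by rwa [abs_of_pos hc])
    rw [hderiv]; linarith
  have hneg : ∀ v, |v| < c → deriv (gdStep ψ) v < 0 := fun v hv => by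
    have := hstr c v (by rwa [abs_of_pos hc])
    rw [hderiv]; linarith
  refine ⟨strictMonoOn_of_deriv_pos (convex_Iic _) hcont.continuousOn fun v hv => ?_,
    strictAntiOn_of_deriv_neg (convex_Icc _ _) hcont.continuousOn fun v hv => ?_,
    strictMonoOn_of_deriv_pos (convex_Ici _) hcont.continuousOn fun v hv => ?_⟩
  · rw [interior_Iic, mem_Iio] at hv
    exact hpos v (by rw [abs_of_neg (by linarith)]; linarith)
  · rw [interior_Icc] at hv
    exact hneg v (abs_lt.2 hv)
  · rw [interior_Ici, mem_Ioi] at hv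
    exact hpos v (by rwa [abs_of_pos (hc.trans hv)])

theorem countable_preimage_gdStep (hψ : Differentiable ℝ ψ)
    (hstr : ∀ s t : ℝ, |t| < |s| → deriv ψ s < deriv ψ t) {c : ℝ} (hc : 0 < c)
    (hψ'c : deriv ψ c = 1) {B : Set ℝ} (hB : B.Countable) : (gdStep ψ ⁻¹' B).Countable := by
  obtain ⟨hleft, hmid, hright⟩ := gdStep_piecewise_strictMono hψ hstr hc hψ'c
  have hpiece : ∀ s, InjOn (gdStep ψ) s → (gdStep ψ ⁻¹' B ∩ s).Countable := fun s hs =>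
    ((mapsTo_preimage _ B).mono_left inter_subset_left).countable_of_injOn
      (hs.mono inter_subset_right) hB
  refine (((hpiece _ hleft.injOn).union (hpiece _ hmid.injOn)).union
    (hpiece _ hright.injOn)).mono fun v hv => ?_
  rcases le_total v (-c) with h | h
  · exact .inl (.inl ⟨hv, h⟩)
  rcases le_total v c with h' | h'
  · exact .inl (.inr ⟨hv, h, h'⟩)
  · exact .inr ⟨hv, h'⟩

theorem countable_iUnion_preimage_iterate_zero (hψ : Differentiable ℝ ψ)
    (hψ' : Continuous (deriv ψ)) (hstr : ∀ s t : ℝ, |t| < |s| → deriv ψ s < deriv ψ t)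
    (hlim : Tendsto (deriv ψ) (cocompact ℝ) (𝓝 0)) (h1 : 1 < deriv ψ 0) :
    (⋃ t, (gdStep ψ)^[t] ⁻¹' {0}).Countable := by
  obtain ⟨c, hc, hψ'c⟩ := exists_pos_deriv_eq hψ' hlim one_pos h1
  exact Set.Countable.iUnion_preimage_iterate
    (fun _ hB => countable_preimage_gdStep hψ hstr hc hψ'c hB) (countable_singleton 0)

theorem exists_countable_gdStep_dichotomy (hψ : Differentiable ℝ ψ) (hψ' : Continuous (deriv ψ))
    (hodd : ψ.Odd) (hpos : ∀ x, 0 < deriv ψ x)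
    (hstr : ∀ s t : ℝ, |t| < |s| → deriv ψ s < deriv ψ t)
    (hlim : Tendsto (deriv ψ) (cocompact ℝ) (𝓝 0)) :
    ∃ B : Set ℝ, B.Countable ∧ ∀ z ∉ B,
      (deriv ψ 0 ≤ 2 → Tendsto (fun t => (gdStep ψ)^[t] z) atTop (𝓝 0)) ∧
      (2 < deriv ψ 0 → ∃ xe, 0 < xe ∧ ψ xe = 2 * xe ∧ (∀ y, 0 < y → ψ y = 2 * y → y = xe) ∧
        Tendsto (fun t => |(gdStep ψ)^[t] z|) atTop (𝓝 xe) ∧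
        Tendsto (fun t => (gdStep ψ)^[t] z + (gdStep ψ)^[t + 1] z) atTop (𝓝 0)) := by
  by_cases h2 : 2 < deriv ψ 0
  · refine ⟨_, countable_iUnion_preimage_iterate_zero hψ hψ' hstr hlim (by linarith),
      fun z hz => ⟨fun h => absurd h (not_le.2 h2), fun _ => ?_⟩⟩
    have hz' : ∀ t, (gdStep ψ)^[t] z ≠ 0 := fun t ht => hz (mem_iUnion.2 ⟨t, ht⟩)
    obtain ⟨xe, hxe, hfix, huniq⟩ :=
      existsUnique_pos_apply_eq_two_mul hψ hψ' hodd hpos hstr hlim h2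
    have habs := tendsto_abs_iterate_gdStep hψ hodd hpos hstr hxe hfix hz'
    refine ⟨xe, hxe, hfix, huniq, habs, ?_⟩
    simpa only [iterate_succ_apply'] using tendsto_add_gdStep hψ.continuous hodd hfix habs
  · exact ⟨∅, countable_empty, fun z _ =>
      ⟨fun _ => tendsto_iterate_gdStep_zero hψ hodd hpos hstr (not_lt.1 h2) z,
        fun h => absurd h h2⟩⟩

end EdgeOfStability

open EdgeOfStability in
theorem gd_edge_of_stability_one_dim {g : ℝ → ℝ} (hg : ContDiff ℝ 2 g) (heven : g.Even)
    (hpos : ∀ x, 0 < deriv (deriv g) x)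
    (hstrict : ∀ s t : ℝ, |t| < |s| → deriv (deriv g) s < deriv (deriv g) t)
    (hlim : Tendsto (deriv (deriv g)) (cocompact ℝ) (𝓝 0)) {η : ℝ} (hη : 0 < η) :
    ∃ B : Set ℝ, B.Countable ∧ ∀ z ∉ B,
      (η ≤ 2 / deriv (deriv g) 0 →
        Tendsto (fun t => (gdStep fun y => η * deriv g y)^[t] z) atTop (𝓝 0)) ∧
      (2 / deriv (deriv g) 0 < η → ∃ xη, 0 < xη ∧ η * deriv g xη = 2 * xη ∧
        (∀ y, 0 < y → η * deriv g y = 2 * y → y = xη) ∧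
        Tendsto (fun t => |(gdStep fun y => η * deriv g y)^[t] z|) atTop (𝓝 xη) ∧
        Tendsto (fun t => (gdStep fun y => η * deriv g y)^[t] z +
          (gdStep fun y => η * deriv g y)^[t + 1] z) atTop (𝓝 0)) := by
  have hg' : ContDiff ℝ 1 (deriv g) := hg.deriv'
  have hψ'_eq : deriv (fun y => η * deriv g y) = fun y => η * deriv (deriv g) y :=
    deriv_const_mul_field' η
  obtain ⟨B, hB, hdyn⟩ := exists_countable_gdStep_dichotomy (ψ := fun y => η * deriv g y)
    ((hg'.differentiable one_ne_zero).const_mul η)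
    (hψ'_eq ▸ (hg'.continuous_deriv le_rfl).const_mul η)
    (fun y => by simp only [heven.deriv y, mul_neg])
    (hψ'_eq ▸ fun x => mul_pos hη (hpos x))
    (hψ'_eq ▸ fun s t h => mul_lt_mul_of_pos_left (hstrict s t h) hη)
    (hψ'_eq ▸ by simpa using hlim.const_mul η)
  refine ⟨B, hB, fun z hz => ?_⟩
  rw [hψ'_eq] at hdyn
  simpa only [le_div_iff₀ (hpos 0), div_lt_iff₀ (hpos 0), mul_comm η] using hdyn z hz

theorem gd_eigendecomposed_edge_of_stability_general
    (n : ℕ) (p : OrthonormalBasis (Fin n) ℝ (EuclideanSpace ℝ (Fin n)))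
    (f : Fin n → ℝ → ℝ) (hf : ∀ i, ContDiff ℝ 2 (f i))
    (heven : ∀ i, ∀ x : ℝ, f i x = f i (-x))
    (hpos : ∀ i, ∀ x : ℝ, 0 < deriv (deriv (f i)) x)
    (hstrict : ∀ i, ∀ s t : ℝ, |t| < |s| → deriv (deriv (f i)) s < deriv (deriv (f i)) t)
    (hlim : ∀ i, Filter.Tendsto (deriv (deriv (f i))) (Filter.cocompact ℝ) (nhds 0))
    (F : EuclideanSpace ℝ (Fin n) → ℝ)
    (hF : ∀ x : EuclideanSpace ℝ (Fin n), F x = ∑ i, f i ⟪p i, x⟫)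
    (η : ℝ) (hη : 0 < η) :
    ∃ A : Set (EuclideanSpace ℝ (Fin n)), MeasureTheory.volume A = 0 ∧
      ∀ x₀ : EuclideanSpace ℝ (Fin n), x₀ ∉ A →
        ∀ x : ℕ → EuclideanSpace ℝ (Fin n), x 0 = x₀ →
          (∀ t : ℕ, x (t + 1) = x t - η • gradient F (x t)) →
          ∀ i : Fin n,
            (η ≤ 2 / deriv (deriv (f i)) 0 →
              Filter.Tendsto (fun t => ⟪p i, x t⟫) Filter.atTop (nhds 0)) ∧
            (2 / deriv (deriv (f i)) 0 < η →
              ∃ xη : ℝ, 0 < xη ∧ η * deriv (f i) xη = 2 * xη ∧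
                (∀ y : ℝ, 0 < y → η * deriv (f i) y = 2 * y → y = xη) ∧
                Filter.Tendsto (fun t => |⟪p i, x t⟫|) Filter.atTop (nhds xη) ∧
                Filter.Tendsto (fun t => ⟪p i, x t⟫ + ⟪p i, x (t + 1)⟫)
                  Filter.atTop (nhds 0)) := by
  choose B hB hdyn using fun i => gd_edge_of_stability_one_dim (hf i)
    (fun x => (heven i x).symm) (hpos i) (hstrict i) (hlim i) hη
  refine ⟨⋃ i, {x | ⟪p i, x⟫ ∈ B i}, measure_iUnion_null fun i =>
    measure_setOf_inner_mem_eq_zero _ (p.orthonormal.ne_zero i) (hB i), ?_⟩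
  intro x₀ hx₀ x hx0 hx i
  have hz : ∀ t, ⟪p i, x t⟫ = (gdStep fun y => η * deriv (f i) y)^[t] ⟪p i, x₀⟫ := fun t =>
    hx0 ▸ inner_gd_eq_iterate_gdStep p (fun j => (hf j).differentiable two_ne_zero) hF hx i t
  simp only [hz]
  exact hdyn i _ fun h => hx₀ (mem_iUnion.2 ⟨i, h⟩)

/-- For `f(x) = Σᵢ fᵢ(pᵢᵀ x)` with each `fᵢ` strictly subquadratic
and `fᵢ'' → 0` at infinity, except for a Lebesgue-null set of initializations,
each component `z_t⁽ⁱ⁾ = pᵢᵀ x_t` of the gradient descent trajectory converges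
to `0` when `η ≤ 2/fᵢ''(0)`, and otherwise converges to the 2-periodic solution
`{± x_η⁽ⁱ⁾}` where `x_η⁽ⁱ⁾` is the unique positive solution of
`η fᵢ'(x) = 2x`. -/
theorem gd_eigendecomposed_edge_of_stability
    (n : ℕ) (p : OrthonormalBasis (Fin n) ℝ (EuclideanSpace ℝ (Fin n)))
    (f : Fin n → ℝ → ℝ) (hf : ∀ i, ContDiff ℝ 2 (f i))
    (heven : ∀ i, ∀ x : ℝ, f i x = f i (-x)) (h0 : ∀ i, f i 0 = 0)
    (hpos : ∀ i, ∀ x : ℝ, 0 < deriv (deriv (f i)) x)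
    (hstrict : ∀ i, ∀ s t : ℝ, |t| < |s| → deriv (deriv (f i)) s < deriv (deriv (f i)) t)
    (hlim : ∀ i, Filter.Tendsto (deriv (deriv (f i))) (Filter.cocompact ℝ) (nhds 0))
    (F : EuclideanSpace ℝ (Fin n) → ℝ)
    (hF : ∀ x : EuclideanSpace ℝ (Fin n), F x = ∑ i, f i ⟪p i, x⟫)
    (η : ℝ) (hη : 0 < η) :
    ∃ A : Set (EuclideanSpace ℝ (Fin n)), MeasureTheory.volume A = 0 ∧
      ∀ x₀ : EuclideanSpace ℝ (Fin n), x₀ ∉ A →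
        ∀ x : ℕ → EuclideanSpace ℝ (Fin n), x 0 = x₀ →
          (∀ t : ℕ, x (t + 1) = x t - η • gradient F (x t)) →
          ∀ i : Fin n,
            (η ≤ 2 / deriv (deriv (f i)) 0 →
              Filter.Tendsto (fun t => ⟪p i, x t⟫) Filter.atTop (nhds 0)) ∧
            (2 / deriv (deriv (f i)) 0 < η →
              ∃ xη : ℝ, 0 < xη ∧ η * deriv (f i) xη = 2 * xη ∧
                (∀ y : ℝ, 0 < y → η * deriv (f i) y = 2 * y → y = xη) ∧
                Filter.Tendsto (fun t => |⟪p i, x t⟫|) Filter.atTop (nhds xη) ∧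
                Filter.Tendsto (fun t => ⟪p i, x t⟫ + ⟪p i, x (t + 1)⟫)
                  Filter.atTop (nhds 0)) :=
  gd_eigendecomposed_edge_of_stability_general n p f hf heven hpos hstrict hlim F hF η hη
end

section
/- Let f : ℝⁿ → ℝ be twice continuously differentiable with a unique global minimum x*, and suppose there is c > 0 with ∇f(x)ᵀ(x − x*) ≥ c‖∇f(x)‖·‖x − x*‖ for all x ∈ ℝⁿ, and ‖∇f(x)‖/‖x − x*‖ → 0 as ‖x‖ → ∞. Then for every η > 0 there exists R_η > 0 such that the closed Euclidean ball B_{R_η}(x*) is invariant under the one-step gradient descent map h(x) = x − η∇f(x): if x ∈ B_{R_η}(x*) then h(x) ∈ B_{R_η}(x*). -/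
/-!
Far from `x*` the gradient is small relative to `‖x - x*‖`, so the alignment condition makes
`‖x - η∇f(x) - x*‖² = ‖x - x*‖² - 2η⟪∇f(x), x - x*⟫ + η²‖∇f(x)‖²` at most `‖x - x*‖²`: a
gradient step never moves such a point farther from `x*`. On the compact ball `B_{R₀}(x*)`
inside which this may fail, the gradient is bounded by some `M`, so a step moves a point by at
most `ηM`. Hence `B_{R₀ + ηM}(x*)` is invariant.
-/

open scoped RealInnerProductSpace
open Filter Metric

theorem exists_norm_le_mul_of_tendsto_div_cocompact {E F : Type*} [NormedAddCommGroup E]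
    [ProperSpace E] [SeminormedAddCommGroup F] {u : E → F} {a : E}
    (hu : Tendsto (fun x => ‖u x‖ / ‖x - a‖) (cocompact E) (nhds 0)) {ε : ℝ} (hε : 0 < ε) :
    ∃ R > 0, ∀ x, R < ‖x - a‖ → ‖u x‖ ≤ ε * ‖x - a‖ := by
  rw [← cobounded_eq_cocompact, ← comap_dist_right_atTop a] at hu
  obtain ⟨R, hR⟩ := eventually_atTop.mp <| eventually_comap.mp <| hu.eventually (gt_mem_nhds hε)
  refine ⟨max R 1, by positivity, fun x hx => ?_⟩
  have hpos : 0 < ‖x - a‖ := by linarith [le_max_right R 1]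
  rw [← div_le_iff₀ hpos]
  exact (hR _ (by rw [dist_eq_norm]; linarith [le_max_left R 1]) x rfl).le

section
variable {E : Type*} [NormedAddCommGroup E] [InnerProductSpace ℝ E]

theorem ContDiff.continuous_gradient [CompleteSpace E] {f : E → ℝ} {n : WithTop ℕ∞}
    (hf : ContDiff ℝ n f) (hn : n ≠ 0) : Continuous (gradient f) :=
  (InnerProductSpace.toDual ℝ E).symm.continuous.comp (hf.continuous_fderiv hn)

theorem norm_sub_smul_le_of_inner_ge {v g : E} {c η : ℝ} (hη : 0 ≤ η)
    (halign : c * (‖g‖ * ‖v‖) ≤ ⟪g, v⟫) (hsmall : η * ‖g‖ ≤ 2 * c * ‖v‖) :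
    ‖v - η • g‖ ≤ ‖v‖ := by
  have hsq : ‖v - η • g‖ ^ 2 = ‖v‖ ^ 2 - 2 * η * ⟪g, v⟫ + η * ‖g‖ * (η * ‖g‖) := by
    rw [norm_sub_sq_real, real_inner_smul_right, norm_smul, Real.norm_of_nonneg hη,
      real_inner_comm]
    ring
  refine (sq_le_sq₀ (norm_nonneg _) (norm_nonneg _)).mp ?_
  rw [hsq]
  nlinarith [mul_le_mul_of_nonneg_left halign (by positivity : (0:ℝ) ≤ 2 * η),
    mul_le_mul_of_nonneg_left hsmall (mul_nonneg hη (norm_nonneg g))]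

theorem exists_mapsTo_closedBall_sub_smul [ProperSpace E] {g : E → E} (hg : Continuous g)
    {a : E} {c : ℝ} (hc : 0 < c) (halign : ∀ x, c * (‖g x‖ * ‖x - a‖) ≤ ⟪g x, x - a⟫)
    (hlim : Tendsto (fun x => ‖g x‖ / ‖x - a‖) (cocompact E) (nhds 0)) {η : ℝ} (hη : 0 < η) :
    ∃ R > 0, Set.MapsTo (fun x => x - η • g x) (closedBall a R) (closedBall a R) := by
  obtain ⟨R₀, hR₀, hfar⟩ := exists_norm_le_mul_of_tendsto_div_cocompact hlim
    (by positivity : 0 < 2 * c / η)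
  obtain ⟨M, hM⟩ := (isCompact_closedBall a R₀).exists_bound_of_continuousOn hg.continuousOn
  have hM0 : 0 ≤ M := (norm_nonneg _).trans (hM a (mem_closedBall_self hR₀.le))
  refine ⟨R₀ + η * M, by positivity, fun x hx => ?_⟩
  rw [mem_closedBall, dist_eq_norm] at hx ⊢
  rw [sub_right_comm]
  rcases le_or_gt ‖x - a‖ R₀ with hnear | hfar'
  · have hgx : ‖g x‖ ≤ M := hM x (by rwa [mem_closedBall, dist_eq_norm])
    calc ‖x - a - η • g x‖ ≤ ‖x - a‖ + η * ‖g x‖ := by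
          simpa [norm_smul, abs_of_pos hη] using norm_sub_le (x - a) (η • g x)
      _ ≤ R₀ + η * M := by gcongr
  · refine le_trans (norm_sub_smul_le_of_inner_ge hη.le (halign x) ?_) hx
    calc η * ‖g x‖ ≤ η * (2 * c / η * ‖x - a‖) := by gcongr; exact hfar x hfar'
      _ = 2 * c * ‖x - a‖ := by field_simp
end

theorem gd_invariant_ball_general
    (n : ℕ) (f : EuclideanSpace ℝ (Fin n) → ℝ) (hf : ContDiff ℝ 2 f)
    (xstar : EuclideanSpace ℝ (Fin n))
    (c : ℝ) (hc : 0 < c)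
    (halign : ∀ x : EuclideanSpace ℝ (Fin n),
      c * (‖gradient f x‖ * ‖x - xstar‖) ≤ ⟪gradient f x, x - xstar⟫)
    (hlim : Filter.Tendsto (fun x : EuclideanSpace ℝ (Fin n) => ‖gradient f x‖ / ‖x - xstar‖)
      (Filter.cocompact (EuclideanSpace ℝ (Fin n))) (nhds 0)) :
    ∀ η : ℝ, 0 < η → ∃ R : ℝ, 0 < R ∧
      ∀ x ∈ Metric.closedBall xstar R,
        x - η • gradient f x ∈ Metric.closedBall xstar R :=
  fun _ hη => exists_mapsTo_closedBall_sub_smul (hf.continuous_gradient two_ne_zero) hc halign hlim hη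

/-- For a subquadratic function `f` (unique global minimum `x*`,
gradient aligned away from `x*` with constant `c > 0`, and
`‖∇f(x)‖/‖x - x*‖ → 0` as `‖x‖ → ∞`), for every learning rate `η > 0` there is
a radius `R_η > 0` such that the closed ball `B_{R_η}(x*)` is invariant under
the one-step gradient descent map `h(x) = x - η ∇f(x)`. -/
theorem gd_invariant_ball
    (n : ℕ) (f : EuclideanSpace ℝ (Fin n) → ℝ) (hf : ContDiff ℝ 2 f)
    (xstar : EuclideanSpace ℝ (Fin n))
    (hmin : ∀ y : EuclideanSpace ℝ (Fin n), y ≠ xstar → f xstar < f y)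
    (c : ℝ) (hc : 0 < c)
    (halign : ∀ x : EuclideanSpace ℝ (Fin n),
      c * (‖gradient f x‖ * ‖x - xstar‖) ≤ ⟪gradient f x, x - xstar⟫)
    (hlim : Filter.Tendsto (fun x : EuclideanSpace ℝ (Fin n) => ‖gradient f x‖ / ‖x - xstar‖)
      (Filter.cocompact (EuclideanSpace ℝ (Fin n))) (nhds 0)) :
    ∀ η : ℝ, 0 < η → ∃ R : ℝ, 0 < R ∧
      ∀ x ∈ Metric.closedBall xstar R,
        x - η • gradient f x ∈ Metric.closedBall xstar R :=
  gd_invariant_ball_general n f hf xstar c hc halign hlim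
end

section
/- Let f : ℝ → ℝ be differentiable, h : ℝ^d → ℝ be differentiable and strictly positive, and η > 0. Suppose (x, y) ∈ ℝ^d × ℝ satisfies the 2-periodicity (edge-of-stability) condition η f'(h(x)·y)·h(x) = 2y. Then the gradient descent update of the x-component of F(x, y) = f(h(x)·y) simplifies to a gradient descent step on log h with step size 2y²: x − η f'(h(x)·y)·y·∇h(x) = x − 2y²·∇(log h)(x). -/
/-! Since `∇(log h) = h⁻¹ • ∇h`, the periodicity condition `η f' h = 2y` turns the effective
step size `η f' y` in front of `∇h` into `2y² / h`, i.e. step size `2y²` in front of `∇(log h)`. -/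

section

variable {E : Type*} [NormedAddCommGroup E] [InnerProductSpace ℝ E] [CompleteSpace E]
  {h : E → ℝ} {x : E}

theorem HasGradientAt.log {g : E} (hg : HasGradientAt h g x) (hx : h x ≠ 0) :
    HasGradientAt (fun z => Real.log (h z)) ((h x)⁻¹ • g) x := by
  rw [hasGradientAt_iff_hasFDerivAt, map_smul]
  exact (Real.hasDerivAt_log hx).comp_hasFDerivAt x hg.hasFDerivAt

theorem gradient_log_comp (hh : DifferentiableAt ℝ h x) (hx : h x ≠ 0) :
    gradient (fun z => Real.log (h z)) x = (h x)⁻¹ • gradient h x :=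
  (hh.hasGradientAt.log hx).gradient

end

theorem quasistatic_update_is_log_flatness_descent_general
    (d : ℕ) (f : ℝ → ℝ)
    (h : EuclideanSpace ℝ (Fin d) → ℝ) (hh : Differentiable ℝ h)
    (hhpos : ∀ z : EuclideanSpace ℝ (Fin d), 0 < h z)
    (η : ℝ)
    (x : EuclideanSpace ℝ (Fin d)) (y : ℝ)
    (hper : η * deriv f (h x * y) * h x = 2 * y) :
    x - (η * deriv f (h x * y) * y) • gradient h x
      = x - (2 * y ^ 2) • gradient (fun z => Real.log (h z)) x := by
  have hx : h x ≠ 0 := (hhpos x).ne'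
  have step_size : η * deriv f (h x * y) * y = 2 * y ^ 2 * (h x)⁻¹ := by
    rw [eq_mul_inv_iff_mul_eq₀ hx]
    linear_combination y * hper
  rw [gradient_log_comp (hh x) hx, smul_smul, step_size]

/-- Under the quasistatic 2-periodicity (edge-of-stability)
condition `η f'(h(x) y) h(x) = 2 y`, the gradient descent update of the
`x`-component of `F(x, y) = f(h(x) y)` equals a gradient descent step on
`log h` with step size `2 y²`. -/
theorem quasistatic_update_is_log_flatness_descent
    (d : ℕ) (f : ℝ → ℝ) (hf : Differentiable ℝ f)
    (h : EuclideanSpace ℝ (Fin d) → ℝ) (hh : Differentiable ℝ h)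
    (hhpos : ∀ z : EuclideanSpace ℝ (Fin d), 0 < h z)
    (η : ℝ) (hη : 0 < η)
    (x : EuclideanSpace ℝ (Fin d)) (y : ℝ)
    (hper : η * deriv f (h x * y) * h x = 2 * y) :
    x - (η * deriv f (h x * y) * y) • gradient h x
      = x - (2 * y ^ 2) • gradient (fun z => Real.log (h z)) x :=
  quasistatic_update_is_log_flatness_descent_general d f h hh hhpos η x y hper
end

section
/- Let σ(z) = max(z, 0), f(x, w) = 1 − σ(wx + 1) + 2σ(wx) − σ(wx − 1), and let 0 < x₁ ≤ x₂ ≤ ⋯ ≤ x_n. Define the empirical loss L(w) = (1/n) Σ_{i=1}^n f(x_i, w)². Then L is the piecewise quadratic/constant function: L(w) = ((1/n) Σ_{i=1}^n x_i²)·w² for |w| ≤ 1/x_n; L(w) = ((1/n) Σ_{i=1}^k x_i²)·w² + (n−k)/n for 1/x_{k+1} ≤ |w| ≤ 1/x_k, k = 1, …, n−1; and L(w) = 1 for |w| ≥ 1/x₁. -/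
/-!
The network is the clipped absolute value: `1 - σ(t + 1) + 2σ(t) - σ(t - 1) = min |t| 1`, so
`f(x, w)² = min(|w| x, 1)²`. For sorted positive data and `1 / x_k ≤ |w| ≤ 1 / x_{k-1}`, exactly
the first `k` samples lie in the quadratic regime and the remaining `n - k` contribute `1` each.
-/

open Finset

theorem one_sub_relu_add_two_relu_sub_relu (t : ℝ) :
    1 - max (t + 1) 0 + 2 * max t 0 - max (t - 1) 0 = min |t| 1 := by
  rcases le_total 0 t with ht | ht <;> rcases le_total 1 |t| with h | h <;>
    simp only [abs_of_nonneg, abs_of_nonpos, *] at h ⊢ <;> grind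

theorem sum_sq_min_abs_mul_one {n k : ℕ} (hkn : k ≤ n) {x : ℕ → ℝ} (hx : ∀ i < n, 0 < x i)
    {w : ℝ} (hsmall : ∀ i < k, |w| ≤ 1 / x i) (hlarge : ∀ i, k ≤ i → i < n → 1 / x i ≤ |w|) :
    ∑ i ∈ range n, min |w * x i| 1 ^ 2 = (∑ i ∈ range k, x i ^ 2) * w ^ 2 + ((n : ℝ) - k) := by
  have hquadratic : ∀ i ∈ range k, min |w * x i| 1 ^ 2 = x i ^ 2 * w ^ 2 := by
    intro i hi
    have hi := mem_range.mp hi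
    have hxi := hx i (hi.trans_le hkn)
    rw [min_eq_left, abs_mul, abs_of_pos hxi, mul_pow, sq_abs, mul_comm]
    rw [abs_mul, abs_of_pos hxi, ← le_div_iff₀ hxi]
    exact hsmall i hi
  have hconstant : ∀ i ∈ Ico k n, min |w * x i| 1 ^ 2 = 1 := by
    intro i hi
    obtain ⟨hki, hin⟩ := mem_Ico.mp hi
    have hxi := hx i hin
    rw [min_eq_right, one_pow]
    rw [abs_mul, abs_of_pos hxi, ← div_le_iff₀ hxi]
    exact hlarge i hki hin
  rw [← sum_range_add_sum_Ico _ hkn, sum_congr rfl hquadratic, sum_congr rfl hconstant, ← sum_mul,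
    sum_const, Nat.card_Ico, nsmul_one, Nat.cast_sub hkn]

/-- For sorted positive data `x₀ ≤ x₁ ≤ ⋯ ≤ x_{n-1}` (0-indexed)
and the empirical loss `L(w) = (1/n) Σᵢ f(xᵢ, w)²` of the two-layer ReLU
network `f(x, w) = 1 - σ(wx+1) + 2σ(wx) - σ(wx-1)`, the loss is the piecewise
quadratic/constant function described in the paper. -/
theorem empirical_loss_piecewise
    (σ : ℝ → ℝ) (hσ : ∀ z : ℝ, σ z = max z 0)
    (f : ℝ → ℝ → ℝ)
    (hf : ∀ x w : ℝ, f x w = 1 - σ (w * x + 1) + 2 * σ (w * x) - σ (w * x - 1))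
    (n : ℕ) (hn : 0 < n) (x : ℕ → ℝ)
    (hpos : 0 < x 0)
    (hmono : ∀ i j : ℕ, i ≤ j → j < n → x i ≤ x j)
    (L : ℝ → ℝ)
    (hL : ∀ w : ℝ, L w = (1 / (n : ℝ)) * ∑ i ∈ Finset.range n, (f (x i) w) ^ 2) :
    (∀ w : ℝ, |w| ≤ 1 / x (n - 1) →
      L w = ((1 / (n : ℝ)) * ∑ i ∈ Finset.range n, (x i) ^ 2) * w ^ 2) ∧
    (∀ k : ℕ, 1 ≤ k → k ≤ n - 1 → ∀ w : ℝ,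
      1 / x k ≤ |w| → |w| ≤ 1 / x (k - 1) →
      L w = ((1 / (n : ℝ)) * ∑ i ∈ Finset.range k, (x i) ^ 2) * w ^ 2
            + ((n : ℝ) - (k : ℝ)) / (n : ℝ)) ∧
    (∀ w : ℝ, 1 / x 0 ≤ |w| → L w = 1) := by
  have hx : ∀ i < n, 0 < x i := fun i hi => hpos.trans_le (hmono 0 i i.zero_le hi)
  have hinv : ∀ i j, i ≤ j → j < n → 1 / x j ≤ 1 / x i := fun i j hij hj =>
    one_div_le_one_div_of_le (hx i (hij.trans_lt hj)) (hmono i j hij hj)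
  have hLk : ∀ k ≤ n, ∀ w, (∀ i < k, |w| ≤ 1 / x i) → (∀ i, k ≤ i → i < n → 1 / x i ≤ |w|) →
      L w = 1 / n * ((∑ i ∈ range k, x i ^ 2) * w ^ 2 + ((n : ℝ) - k)) := by
    intro k hk w hsmall hlarge
    rw [hL, ← sum_sq_min_abs_mul_one hk hx hsmall hlarge]
    simp only [hf, hσ, one_sub_relu_add_two_relu_sub_relu]
  refine ⟨fun w hw => ?_, fun k hk hkn w hlarge hsmall => ?_, fun w hw => ?_⟩
  · rw [hLk n le_rfl w (fun i hi => hw.trans (hinv i (n - 1) (by omega) (by omega))) (by omega)]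
    ring
  · rw [hLk k (by omega) w (fun i hi => hsmall.trans (hinv i (k - 1) (by omega) (by omega)))
      (fun i hki hin => (hinv k i hki hin).trans hlarge)]
    ring
  · rw [hLk 0 n.zero_le w (by simp) (fun i _ hin => (hinv 0 i i.zero_le hin).trans hw)]
    simp [hn.ne']
end

section
/- Let σ(z) = max(z, 0), f(x, w) = 1 − σ(wx + 1) + 2σ(wx) − σ(wx − 1), let C > 0, and let μ be the uniform probability distribution on [0, C]. Then the population loss L(w) = (1/C) ∫_0^C f(x, w)² dx is given explicitly by L(w) = (C²/3)·w² if |w| ≤ 1/C, and L(w) = 1 − 2/(3C|w|) if |w| > 1/C. -/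
/-! The network collapses to `f(x, w)² = min ((w x)², 1)`: the three ReLUs form the hat
`max (1 - |t|) 0` at `t = wx`, so `f = 1 - hat = min (|wx|) 1`.
Integrating over `[0, C]`, the integrand is `w² x²` up to the kink `x = 1/|w|` and `1` after it. -/

open intervalIntegral

lemma relu_combination_sq (t : ℝ) :
    (1 - max (t + 1) 0 + 2 * max t 0 - max (t - 1) 0) ^ 2 = min (t ^ 2) 1 := by
  rcases le_total t (-1) with h | h
  · rw [max_eq_right (by linarith), max_eq_right (by linarith),
      max_eq_right (by linarith), min_eq_right (by nlinarith)]; ring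
  rcases le_total t 0 with h2 | h2
  · rw [max_eq_left (by linarith), max_eq_right h2,
      max_eq_right (by linarith), min_eq_left (by nlinarith)]; ring
  rcases le_total t 1 with h3 | h3
  · rw [max_eq_left (by linarith), max_eq_left h2,
      max_eq_right (by linarith), min_eq_left (by nlinarith)]; ring
  · rw [max_eq_left (by linarith), max_eq_left (by linarith),
      max_eq_left (by linarith), min_eq_right (by nlinarith)]; ring

section ClippedSquare

variable {w b : ℝ}

lemma integral_min_sq_one_of_abs_mul_le (hb : 0 ≤ b) (hwb : |w| * b ≤ 1) :
    ∫ x in (0 : ℝ)..b, min ((w * x) ^ 2) 1 = w ^ 2 * b ^ 3 / 3 := by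
  have hquad : ∫ x in (0 : ℝ)..b, min ((w * x) ^ 2) 1 = ∫ x in (0 : ℝ)..b, w ^ 2 * x ^ 2 := by
    refine integral_congr fun x hx => ?_
    rw [Set.uIcc_of_le hb] at hx
    have hwx : |w * x| ≤ 1 := by
      rw [abs_mul, abs_of_nonneg hx.1]
      exact (mul_le_mul_of_nonneg_left hx.2 (abs_nonneg w)).trans hwb
    rw [min_eq_left (sq_le_one_iff_abs_le_one _ |>.mpr hwx), mul_pow]
  rw [hquad, integral_const_mul, integral_pow]
  ring

lemma integral_min_sq_one_of_one_le_abs_mul (hb : 0 ≤ b) (hwb : 1 ≤ |w| * b) :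
    ∫ x in (0 : ℝ)..b, min ((w * x) ^ 2) 1 = b - 2 / (3 * |w|) := by
  have hw : 0 < |w| := pos_of_mul_pos_left (one_pos.trans_le hwb) hb
  set a := 1 / |w| with ha
  have ha0 : 0 ≤ a := by positivity
  have hwa : |w| * a = 1 := by rw [ha]; field_simp
  have hab : a ≤ b := by rw [ha, div_le_iff₀ hw]; linarith
  have hcont : Continuous fun x : ℝ => min ((w * x) ^ 2) 1 := by fun_prop
  have hflat : ∫ x in a..b, min ((w * x) ^ 2) 1 = b - a := by
    rw [← integral_one]
    refine integral_congr fun x hx => ?_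
    rw [Set.uIcc_of_le hab] at hx
    have hwx : 1 ≤ |w * x| := by
      rw [abs_mul, abs_of_nonneg (ha0.trans hx.1), ← hwa]
      exact mul_le_mul_of_nonneg_left hx.1 (abs_nonneg w)
    exact min_eq_right (one_le_sq_iff_one_le_abs _ |>.mpr hwx)
  rw [← integral_add_adjacent_intervals (hcont.intervalIntegrable 0 a)
      (hcont.intervalIntegrable a b), integral_min_sq_one_of_abs_mul_le ha0 hwa.le, hflat,
    ← sq_abs w, ha]
  field_simp
  ring

end ClippedSquare

/-- For the uniform distribution on `[0, C]`, the population loss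
`L(w) = (1/C) ∫₀^C f(x, w)² dx` of the two-layer ReLU network
`f(x, w) = 1 - σ(wx+1) + 2σ(wx) - σ(wx-1)` equals `(C²/3) w²` for
`|w| ≤ 1/C`, and `1 - 2/(3C|w|)` for `|w| > 1/C`. -/
theorem uniform_population_loss
    (σ : ℝ → ℝ) (hσ : ∀ z : ℝ, σ z = max z 0)
    (f : ℝ → ℝ → ℝ)
    (hf : ∀ x w : ℝ, f x w = 1 - σ (w * x + 1) + 2 * σ (w * x) - σ (w * x - 1))
    (C : ℝ) (hC : 0 < C)
    (L : ℝ → ℝ)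
    (hL : ∀ w : ℝ, L w = (1 / C) * ∫ x in (0 : ℝ)..C, (f x w) ^ 2) :
    ∀ w : ℝ,
      (|w| ≤ 1 / C → L w = (C ^ 2 / 3) * w ^ 2) ∧
      (1 / C < |w| → L w = 1 - 2 / (3 * C * |w|)) := by
  intro w
  have hLw : L w = (1 / C) * ∫ x in (0 : ℝ)..C, min ((w * x) ^ 2) 1 := by
    simp only [hL, hf, hσ, relu_combination_sq]
  refine ⟨fun hw => ?_, fun hw => ?_⟩
  · rw [hLw, integral_min_sq_one_of_abs_mul_le hC.le ((le_div_iff₀ hC).mp hw)]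
    field_simp
  · rw [hLw, integral_min_sq_one_of_one_le_abs_mul hC.le ((div_lt_iff₀ hC).mp hw).le]
    field_simp
end
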